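/- arXiv:2503.20775 — 2 statements merged into one kernel-verified Lean document; each statement's English description precedes it below -/
import Mathlib

section
/- The map μ : ℝ⁴ → ℝ³ sending (q_x, p_x, q_y, p_y) to (τ₁, τ₂, τ₃) = (q_x q_y + p_x p_y, ½(p_x² + q_x² − p_y² − q_y²), q_x p_y − q_y p_x) maps the level set H = E (with E > 0) onto the sphere of radius E in ℝ³. -/
/-- 2D harmonic oscillator Hamiltonian; coordinates are `x = (qx, px, qy, py)`. -/
noncomputable def ham (x : ℝ × ℝ × ℝ × ℝ) : ℝ :=
  (x.2.1 ^ 2 + x.2.2.2 ^ 2 + x.1 ^ 2 + x.2.2.1 ^ 2) / 2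

/-- The map `μ = (τ₁, τ₂, τ₃) : ℝ⁴ → ℝ³`. -/
noncomputable def hopfMap (x : ℝ × ℝ × ℝ × ℝ) : ℝ × ℝ × ℝ :=
  (x.1 * x.2.2.1 + x.2.1 * x.2.2.2,
   (x.2.1 ^ 2 + x.1 ^ 2 - x.2.2.2 ^ 2 - x.2.2.1 ^ 2) / 2,
   x.1 * x.2.2.2 - x.2.2.1 * x.2.1)

/-!
In complex coordinates `z₁ = q_x + i p_x`, `z₂ = q_y + i p_y` one has `τ₁ + i τ₃ = z̄₁ z₂`,
`τ₂ = (|z₁|² - |z₂|²) / 2` and `H = (|z₁|² + |z₂|²) / 2`, so `|τ|² = H²` is the identity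
`|z̄₁ z₂|² + ((|z₁|² - |z₂|²) / 2)² = ((|z₁|² + |z₂|²) / 2)²`. Conversely, a point `τ` of the
sphere of radius `E` is the image of `z₁ = √(E + τ₂)`, `z₂ = (τ₁ + i τ₃) / z₁`, since then
`|z₂|² = (E² - τ₂²) / (E + τ₂) = E - τ₂`; the only point this misses is the south pole
`(0, -E, 0)`, the image of `z₁ = 0`, `z₂ = √(2E)`.
-/

theorem hopfMap_sq_add_sq_add_sq (x : ℝ × ℝ × ℝ × ℝ) :
    (hopfMap x).1 ^ 2 + (hopfMap x).2.1 ^ 2 + (hopfMap x).2.2 ^ 2 = ham x ^ 2 := by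
  simp only [hopfMap, ham]
  ring

theorem ham_south_pole_preimage {E : ℝ} (hE : 0 ≤ E) : ham (0, 0, √(2 * E), 0) = E := by
  simp only [ham, Real.sq_sqrt (by linarith : (0 : ℝ) ≤ 2 * E)]
  ring

theorem hopfMap_south_pole_preimage {E : ℝ} (hE : 0 ≤ E) :
    hopfMap (0, 0, √(2 * E), 0) = (0, -E, 0) := by
  simp only [hopfMap, Real.sq_sqrt (by linarith : (0 : ℝ) ≤ 2 * E), Prod.mk.injEq]
  refine ⟨?_, ?_, ?_⟩ <;> ring

section Chart

variable {E a b c : ℝ} (hb : 0 < E + b)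
include hb

theorem ham_chart_preimage (h : a ^ 2 + b ^ 2 + c ^ 2 = E ^ 2) :
    ham (√(E + b), 0, a / √(E + b), c / √(E + b)) = E := by
  have hs : √(E + b) ^ 2 = E + b := Real.sq_sqrt hb.le
  have hs0 : √(E + b) ≠ 0 := (Real.sqrt_pos.mpr hb).ne'
  simp only [ham, div_pow, hs]
  field_simp
  linear_combination h

theorem hopfMap_chart_preimage (h : a ^ 2 + b ^ 2 + c ^ 2 = E ^ 2) :
    hopfMap (√(E + b), 0, a / √(E + b), c / √(E + b)) = (a, b, c) := by
  have hs : √(E + b) ^ 2 = E + b := Real.sq_sqrt hb.le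
  have hs0 : √(E + b) ≠ 0 := (Real.sqrt_pos.mpr hb).ne'
  simp only [hopfMap, div_pow, hs, Prod.mk.injEq]
  refine ⟨?_, ?_, ?_⟩ <;> field_simp
  · ring
  · linear_combination -h
  · ring

end Chart

theorem exists_ham_eq_hopfMap_eq {E a b c : ℝ} (hE : 0 ≤ E)
    (h : a ^ 2 + b ^ 2 + c ^ 2 = E ^ 2) : ∃ x, ham x = E ∧ hopfMap x = (a, b, c) := by
  have hb : -E ≤ b := by nlinarith
  rcases hb.eq_or_lt with hb | hb
  · have ha : a = 0 := by nlinarith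
    have hc : c = 0 := by nlinarith
    subst ha hc hb
    exact ⟨_, ham_south_pole_preimage hE, hopfMap_south_pole_preimage hE⟩
  · have hb : 0 < E + b := by linarith
    exact ⟨_, ham_chart_preimage hb h, hopfMap_chart_preimage hb h⟩

/-- `μ` maps the level set `H = E` (E > 0) onto the sphere of radius `E` in ℝ³. -/
theorem hopfMap_image_level_set (E : ℝ) (hE : 0 < E) :
    hopfMap '' {x : ℝ × ℝ × ℝ × ℝ | ham x = E}
      = {v : ℝ × ℝ × ℝ | v.1 ^ 2 + v.2.1 ^ 2 + v.2.2 ^ 2 = E ^ 2} := by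
  ext v
  constructor
  · rintro ⟨x, hx, rfl⟩
    rw [Set.mem_ofPred_eq, hopfMap_sq_add_sq_add_sq, hx]
  · exact fun hv => exists_ham_eq_hopfMap_eq hE.le hv
end

section
/- Two points (q_x, p_x, q_y, p_y) and (q_x', p_x', q_y', p_y') on the level set H = E (E > 0) have the same image under the map (τ₁, τ₂, τ₃) if and only if they lie in the same orbit of the S¹-action Φ_t(q, p) = (q cos t − p sin t, p cos t + q sin t) acting diagonally on (q_x,p_x) and (q_y,p_y). -/
/-- The `S¹` action `Φ_t(q,p) = (q cos t − p sin t, p cos t + q sin t)`, acting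
diagonally on `(qx, px)` and `(qy, py)`. -/
noncomputable def Phi (t : ℝ) (x : ℝ × ℝ × ℝ × ℝ) : ℝ × ℝ × ℝ × ℝ :=
  (x.1 * Real.cos t - x.2.1 * Real.sin t,
   x.2.1 * Real.cos t + x.1 * Real.sin t,
   x.2.2.1 * Real.cos t - x.2.2.2 * Real.sin t,
   x.2.2.2 * Real.cos t + x.2.2.1 * Real.sin t)

/-!
Identify `ℝ⁴` with `ℂ²` via `z = q_x + i p_x`, `w = q_y + i p_y`. Then `Φ_t` is multiplication
by `e^{it}`, while `τ₁ + i τ₃ = z̄ w` and `τ₂ = (|z|² - |w|²) / 2`. Since `τ₁² + τ₂² + τ₃² = H²`,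
the values of `τ` determine `|z|` and `|w|`, and then `z̄ w` determines `(z, w)` up to a common
factor of modulus one.
-/

open Complex ComplexConjugate

namespace Complex

theorem exists_norm_eq_one_of_conj_mul_eq_of_ne_zero {z w z' w' : ℂ} (hz : z ≠ 0)
    (hzz' : ‖z‖ = ‖z'‖) (h : conj z * w = conj z' * w') :
    ∃ u : ℂ, ‖u‖ = 1 ∧ z' = u * z ∧ w' = u * w := by
  refine ⟨z' / z, by rw [norm_div, ← hzz', div_self (norm_ne_zero_iff.mpr hz)],
    (div_mul_cancel₀ z' hz).symm, ?_⟩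
  have key : conj z * (z * w') = conj z * (z' * w) :=
    calc conj z * (z * w') = (‖z'‖ ^ 2 : ℂ) * w' := by rw [← hzz', ← mul_conj']; ring
      _ = z' * (conj z' * w') := by rw [← mul_conj']; ring
      _ = conj z * (z' * w) := by rw [← h]; ring
  rw [div_mul_eq_mul_div, eq_div_iff hz, mul_comm]
  exact mul_left_cancel₀ ((map_ne_zero _).mpr hz) key

theorem exists_norm_eq_one_of_conj_mul_eq {z w z' w' : ℂ} (hzz' : ‖z‖ = ‖z'‖)
    (hww' : ‖w‖ = ‖w'‖) (h : conj z * w = conj z' * w') :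
    ∃ u : ℂ, ‖u‖ = 1 ∧ z' = u * z ∧ w' = u * w := by
  by_cases hz : z = 0
  · have hz' : z' = 0 := by rwa [hz, norm_zero, eq_comm, norm_eq_zero] at hzz'
    subst hz hz'
    by_cases hw : w = 0
    · have hw' : w' = 0 := by rwa [hw, norm_zero, eq_comm, norm_eq_zero] at hww'
      exact ⟨1, norm_one, by simp, by simp [hw, hw']⟩
    · obtain ⟨u, hu, hwu, -⟩ :=
        exists_norm_eq_one_of_conj_mul_eq_of_ne_zero (w := 0) (w' := 0) hw hww' (by simp)
      exact ⟨u, hu, by simp, hwu⟩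
  · exact exists_norm_eq_one_of_conj_mul_eq_of_ne_zero hz hzz' h

end Complex

noncomputable def complexHopfMap (v : ℂ × ℂ) : ℝ × ℂ :=
  ((‖v.1‖ ^ 2 - ‖v.2‖ ^ 2) / 2, conj v.1 * v.2)

theorem complexHopfMap_fst_sq_add_norm_snd_sq (v : ℂ × ℂ) :
    (complexHopfMap v).1 ^ 2 + ‖(complexHopfMap v).2‖ ^ 2 = ((‖v.1‖ ^ 2 + ‖v.2‖ ^ 2) / 2) ^ 2 := by
  simp only [complexHopfMap, norm_mul, norm_conj]
  ring

theorem norm_eq_of_complexHopfMap_eq {v v' : ℂ × ℂ} (h : complexHopfMap v = complexHopfMap v') :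
    ‖v.1‖ = ‖v'.1‖ ∧ ‖v.2‖ = ‖v'.2‖ := by
  have hsum : (‖v.1‖ ^ 2 + ‖v.2‖ ^ 2) / 2 = (‖v'.1‖ ^ 2 + ‖v'.2‖ ^ 2) / 2 :=
    (sq_eq_sq₀ (by positivity) (by positivity)).mp <| by
      rw [← complexHopfMap_fst_sq_add_norm_snd_sq, ← complexHopfMap_fst_sq_add_norm_snd_sq, h]
  have hdiff : (‖v.1‖ ^ 2 - ‖v.2‖ ^ 2) / 2 = (‖v'.1‖ ^ 2 - ‖v'.2‖ ^ 2) / 2 :=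
    congrArg Prod.fst h
  constructor <;> refine (sq_eq_sq₀ (norm_nonneg _) (norm_nonneg _)).mp ?_ <;> linarith

theorem complexHopfMap_eq_iff {v v' : ℂ × ℂ} :
    complexHopfMap v = complexHopfMap v' ↔ ∃ u : ℂ, ‖u‖ = 1 ∧ v' = u • v := by
  constructor
  · intro h
    obtain ⟨hz, hw⟩ := norm_eq_of_complexHopfMap_eq h
    obtain ⟨u, hu, h₁, h₂⟩ := exists_norm_eq_one_of_conj_mul_eq hz hw (congrArg Prod.snd h)
    exact ⟨u, hu, Prod.ext h₁ h₂⟩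
  · rintro ⟨u, hu, rfl⟩
    have hu' : conj u * u = 1 := by rw [mul_comm, mul_conj', hu]; norm_num
    simp only [complexHopfMap, Prod.smul_fst, Prod.smul_snd, smul_eq_mul, norm_mul, hu, one_mul,
      map_mul]
    rw [mul_mul_mul_comm, hu', one_mul]

def toComplexPair (x : ℝ × ℝ × ℝ × ℝ) : ℂ × ℂ :=
  (⟨x.1, x.2.1⟩, ⟨x.2.2.1, x.2.2.2⟩)

theorem toComplexPair_injective : Function.Injective toComplexPair := by
  rintro ⟨a, b, c, d⟩ ⟨a', b', c', d'⟩ h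
  simp_all [toComplexPair, Complex.ext_iff]

theorem toComplexPair_Phi (t : ℝ) (x : ℝ × ℝ × ℝ × ℝ) :
    toComplexPair (Phi t x) = exp (t * I) • toComplexPair x := by
  refine Prod.ext (Complex.ext ?_ ?_) (Complex.ext ?_ ?_) <;>
    simp [toComplexPair, Phi, exp_mul_I, ← ofReal_cos, ← ofReal_sin] <;> ring

theorem hopfMap_eq_complexHopfMap (x : ℝ × ℝ × ℝ × ℝ) :
    hopfMap x = ((complexHopfMap (toComplexPair x)).2.re, (complexHopfMap (toComplexPair x)).1,
      (complexHopfMap (toComplexPair x)).2.im) := by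
  simp only [hopfMap, complexHopfMap, toComplexPair, Complex.sq_norm, normSq_mk, mul_re, mul_im,
    conj_re, conj_im, Prod.mk.injEq]
  refine ⟨by ring, by ring, by ring⟩

theorem hopfMap_eq_iff {x y : ℝ × ℝ × ℝ × ℝ} :
    hopfMap x = hopfMap y ↔ complexHopfMap (toComplexPair x) = complexHopfMap (toComplexPair y) := by
  rw [hopfMap_eq_complexHopfMap, hopfMap_eq_complexHopfMap]
  refine ⟨fun h => ?_, fun h => by rw [h]⟩
  simp only [Prod.mk.injEq] at h
  exact Prod.ext h.2.1 (Complex.ext h.1 h.2.2)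

theorem hopfMap_fibers_eq_orbits_general (x y : ℝ × ℝ × ℝ × ℝ) :
    hopfMap x = hopfMap y ↔ ∃ t : ℝ, Phi t x = y := by
  simp_rw [hopfMap_eq_iff, complexHopfMap_eq_iff, ← toComplexPair_injective.eq_iff,
    toComplexPair_Phi, norm_eq_one_iff]
  constructor
  · rintro ⟨u, ⟨t, rfl⟩, h⟩
    exact ⟨t, h.symm⟩
  · rintro ⟨t, h⟩
    exact ⟨_, ⟨t, rfl⟩, h.symm⟩

/-- Two points on the level set `H = E` (E > 0) have the same image under
`(τ₁, τ₂, τ₃)` iff they lie in the same `S¹`-orbit. -/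
theorem hopfMap_fibers_eq_orbits (E : ℝ) (hE : 0 < E) (x y : ℝ × ℝ × ℝ × ℝ)
    (hx : ham x = E) (hy : ham y = E) :
    hopfMap x = hopfMap y ↔ ∃ t : ℝ, Phi t x = y :=
  hopfMap_fibers_eq_orbits_general x y
end
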